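/- arXiv:1302.4075 — 2 statements merged into one kernel-verified Lean document; each statement's English description precedes it below -/
import Mathlib

section
/- Let k be a field and let G₁, G₂ be abelian groups. In the group algebra k[G₁ × G₂], let J denote the augmentation ideal, and let I₁ and I₂ denote the ideals of k[G₁ × G₂] generated by the images of the augmentation ideals J₁ ⊆ k[G₁] and J₂ ⊆ k[G₂] under the algebra maps induced by the inclusions G₁ → G₁ × G₂ and G₂ → G₁ × G₂. Then for every n ≥ 0, J^n = Σ_{s+t=n} I₁^s · I₂^t. -/
universe u

/-!
The augmentation ideal `J` of `k[G]` is generated by the elements `g - 1`, and in `k[G₁ × G₂]`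
`(g₁, g₂) - 1 = ((g₁, 1) - 1) + (g₁, 1) * ((1, g₂) - 1)`, so `J = I₁ + I₂`. The ideals of a
commutative ring form an idempotent semiring, in which every positive binomial coefficient is `1`;
the binomial theorem for `(I₁ + I₂)ⁿ` then becomes the claimed sum.
-/

theorem add_pow_eq_sum_antidiagonal {α : Type*} [IdemCommSemiring α] (a b : α) (n : ℕ) :
    (a + b) ^ n = ∑ p ∈ Finset.HasAntidiagonal.antidiagonal n, a ^ p.1 * b ^ p.2 := by
  rw [(Commute.all a b).add_pow']
  refine Finset.sum_congr rfl fun p hp => nsmul_eq_self ?_ _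
  exact (Nat.choose_pos (Finset.HasAntidiagonal.antidiagonal.fst_le hp)).ne'

namespace MonoidAlgebra

variable (k : Type*) [CommRing k]

noncomputable abbrev augmentationIdeal (G : Type*) [Monoid G] : Ideal (MonoidAlgebra k G) :=
  RingHom.ker (lift k k G 1)

variable {k}

theorem of_sub_one_mem_augmentationIdeal {G : Type*} [Monoid G] (g : G) :
    of k G g - 1 ∈ augmentationIdeal k G := by
  simp [RingHom.mem_ker]

theorem augmentationIdeal_eq_span (G : Type*) [Monoid G] :
    augmentationIdeal k G = Ideal.span (Set.range fun g : G => of k G g - 1) := by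
  refine le_antisymm (fun x hx => ?_) (Ideal.span_le.mpr ?_)
  · have sub_augmentation_mem : ∀ y : MonoidAlgebra k G, y - algebraMap k _ (lift k k G 1 y) ∈
        Ideal.span (Set.range fun g : G => of k G g - 1) := by
      intro y
      induction y using induction_linear with
      | zero => simp
      | add a b ha hb =>
        convert add_mem ha hb using 1
        rw [map_add, map_add]
        abel
      | single g r =>
        have hsingle : single g r - algebraMap k _ (lift k k G 1 (single g r)) =
            algebraMap k _ r * (of k G g - 1) := by
          simp [mul_sub]
        rw [hsingle]
        exact Ideal.mul_mem_left _ _ (Ideal.subset_span ⟨g, rfl⟩)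
    simpa [RingHom.mem_ker.mp hx] using sub_augmentation_mem x
  · rintro _ ⟨g, rfl⟩
    exact of_sub_one_mem_augmentationIdeal g

theorem lift_one_comp_mapDomainAlgHom {M N : Type*} [Monoid M] [Monoid N] (f : M →* N) :
    (lift k k N 1).comp (mapDomainAlgHom k k f) = lift k k M 1 :=
  algHom_ext (fun _ => by simp) (Subsingleton.elim _ _)

theorem map_augmentationIdeal_le {M N : Type*} [Monoid M] [Monoid N] (f : M →* N) :
    (augmentationIdeal k M).map (mapDomainAlgHom k k f) ≤ augmentationIdeal k N := by
  refine Ideal.map_le_iff_le_comap.mpr fun x hx => ?_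
  rw [Ideal.mem_comap, RingHom.mem_ker, ← AlgHom.comp_apply, lift_one_comp_mapDomainAlgHom]
  exact hx

theorem of_sub_one_mem_map_augmentationIdeal {M N : Type*} [Monoid M] [Monoid N] (f : M →* N)
    (g : M) : of k N (f g) - 1 ∈ (augmentationIdeal k M).map (mapDomainAlgHom k k f) := by
  convert Ideal.mem_map_of_mem (mapDomainAlgHom k k f) (of_sub_one_mem_augmentationIdeal g)
  simp [map_sub, of_apply]

theorem augmentationIdeal_prod_eq_add (G₁ G₂ : Type*) [Monoid G₁] [Monoid G₂] :
    augmentationIdeal k (G₁ × G₂) =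
      (augmentationIdeal k G₁).map (mapDomainAlgHom k k (MonoidHom.inl G₁ G₂)) +
        (augmentationIdeal k G₂).map (mapDomainAlgHom k k (MonoidHom.inr G₁ G₂)) := by
  refine le_antisymm ?_ (sup_le (map_augmentationIdeal_le _) (map_augmentationIdeal_le _))
  rw [augmentationIdeal_eq_span, Ideal.span_le]
  rintro _ ⟨⟨g₁, g₂⟩, rfl⟩
  have split : of k (G₁ × G₂) (g₁, g₂) - 1 =
      (of k _ (MonoidHom.inl G₁ G₂ g₁) - 1) +
        of k _ (MonoidHom.inl G₁ G₂ g₁) * (of k _ (MonoidHom.inr G₁ G₂ g₂) - 1) := by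
    rw [mul_sub, ← map_mul]
    simp
  change of k _ (g₁, g₂) - 1 ∈ _
  rw [split]
  exact Submodule.add_mem_sup (of_sub_one_mem_map_augmentationIdeal _ g₁)
    (Ideal.mul_mem_left _ _ (of_sub_one_mem_map_augmentationIdeal _ g₂))

end MonoidAlgebra

/-- for a field `k` and abelian groups `G₁, G₂`, in the group algebra
`k[G₁ × G₂]` the powers of the augmentation ideal `J` satisfy
`Jⁿ = Σ_{s+t=n} I₁ˢ · I₂ᵗ`, where `I₁, I₂` are the ideals generated by the images of the
augmentation ideals of `k[G₁]` and `k[G₂]` under the maps induced by the inclusions. -/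
theorem augmentation_ideal_power_of_product
    (k : Type u) [Field k] (G₁ G₂ : Type u) [CommGroup G₁] [CommGroup G₂] (n : ℕ) :
    -- the augmentation ideal of `k[G₁ × G₂]`
    (RingHom.ker (MonoidAlgebra.lift k k (G₁ × G₂) 1) : Ideal (MonoidAlgebra k (G₁ × G₂))) ^ n =
      ∑ p ∈ Finset.HasAntidiagonal.antidiagonal n,
        (Ideal.map (MonoidAlgebra.mapDomainAlgHom k k (MonoidHom.inl G₁ G₂))
            (RingHom.ker (MonoidAlgebra.lift k k G₁ 1))) ^ p.1 *
        (Ideal.map (MonoidAlgebra.mapDomainAlgHom k k (MonoidHom.inr G₁ G₂))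
            (RingHom.ker (MonoidAlgebra.lift k k G₂ 1))) ^ p.2 := by
  rw [← add_pow_eq_sum_antidiagonal]
  exact congrArg (· ^ n) (MonoidAlgebra.augmentationIdeal_prod_eq_add G₁ G₂)
end

section
/- Let k be an algebraically closed field and let G be a finitely generated abelian group. Then the map sending a group homomorphism ρ : G → kˣ to the kernel of its k-linear extension ρ̄ : k[G] → k is a bijection from the set Hom(G, kˣ) of kˣ-valued characters of G onto the set of maximal ideals of the group algebra k[G]. -/
universe u

/-!
A character `ρ : G → kˣ` is the same as a `k`-algebra map `k[G] → k`, so it suffices that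
`φ ↦ ker φ` is a bijection from `k`-algebra maps `A → k` onto the maximal ideals of any finitely
generated `k`-algebra `A`. Injectivity holds because `a - φ a ∈ ker φ`; surjectivity is the weak
Nullstellensatz: `A ⧸ m` is a field of finite type over `k`, hence finite over `k`, hence equal
to `k` as `k` is algebraically closed.
-/

namespace AlgHom

theorem ext_of_ker_eq {R A : Type*} [CommRing R] [Ring A] [Algebra R A] {φ ψ : A →ₐ[R] R}
    (h : RingHom.ker φ = RingHom.ker ψ) : φ = ψ := by
  ext a
  have hmem : a - algebraMap R A (φ a) ∈ RingHom.ker ψ := by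
    rw [← h, RingHom.mem_ker, map_sub, AlgHom.commutes, Algebra.algebraMap_self_apply, sub_self]
  rwa [RingHom.mem_ker, map_sub, AlgHom.commutes, sub_eq_zero, eq_comm] at hmem

theorem ker_isMaximal {K A : Type*} [Field K] [Ring A] [Algebra K A] (φ : A →ₐ[K] K) :
    (RingHom.ker φ).IsMaximal :=
  RingHom.ker_isMaximal_of_surjective φ fun c => ⟨algebraMap K A c, φ.commutes c⟩

end AlgHom

section IsAlgClosed

variable {k A : Type*} [Field k] [IsAlgClosed k] [CommRing A] [Algebra k A]
  [Algebra.FiniteType k A]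

theorem Ideal.IsMaximal.exists_algHom_ker_eq {I : Ideal A} (hI : I.IsMaximal) :
    ∃ φ : A →ₐ[k] k, RingHom.ker φ = I := by
  let := Ideal.Quotient.field I
  have : Algebra.FiniteType k (A ⧸ I) :=
    .of_surjective (Ideal.Quotient.mkₐ k I) Ideal.Quotient.mk_surjective
  have : Module.Finite k (A ⧸ I) := finite_of_finite_type_of_isJacobsonRing k _
  let e : k ≃ₐ[k] A ⧸ I :=
    AlgEquiv.ofBijective (Algebra.ofId k _) IsAlgClosed.algebraMap_bijective_of_isIntegral
  refine ⟨e.symm.toAlgHom.comp (Ideal.Quotient.mkₐ k I), ?_⟩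
  change RingHom.ker ((e.symm : A ⧸ I →+* k).comp (Ideal.Quotient.mk I)) = I
  rw [RingHom.ker_comp_of_injective _ e.symm.injective, Ideal.mk_ker]

theorem AlgHom.ker_bijOn_isMaximal :
    Set.BijOn (fun φ : A →ₐ[k] k => RingHom.ker φ) Set.univ { I : Ideal A | I.IsMaximal } :=
  ⟨fun φ _ => φ.ker_isMaximal, fun _ _ _ _ h => AlgHom.ext_of_ker_eq h,
    fun _ hI => (Ideal.IsMaximal.exists_algHom_ker_eq hI).imp fun _ h => ⟨Set.mem_univ _, h⟩⟩

end IsAlgClosed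

/-- for an algebraically closed field `k` and a finitely generated abelian
group `G`, the map sending a character `ρ : G → kˣ` to the kernel of its `k`-linear
extension `k[G] → k` is a bijection from `Hom(G, kˣ)` onto the set of maximal ideals of
the group algebra `k[G]`. -/
theorem characters_biject_onto_maximal_ideals
    (k : Type u) [Field k] [IsAlgClosed k]
    (G : Type u) [CommGroup G] [Group.FG G] :
    Set.BijOn
      (fun ρ : G →* kˣ =>
        (RingHom.ker (MonoidAlgebra.lift k k G ((Units.coeHom k).comp ρ)) :
          Ideal (MonoidAlgebra k G)))
      Set.univ
      { I : Ideal (MonoidAlgebra k G) | I.IsMaximal } :=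
  let characterEquiv : (G →* kˣ) ≃ (MonoidAlgebra k G →ₐ[k] k) :=
    MonoidHom.toHomUnitsMulEquiv.symm.toEquiv.trans (MonoidAlgebra.lift k k G)
  AlgHom.ker_bijOn_isMaximal.comp (Set.bijOn_univ.2 characterEquiv.bijective)
end
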